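/- If X is a homogeneous θⁿ-Urysohn topological space, then |X| ≤ 2^(θⁿ-Uc(X) · π_χ(X)), where θⁿ-Uc(X) is the θⁿ-Urysohn cellularity and π_χ(X) is the π-character of X. -/

import Mathlib

open Set Topology Cardinal

universe u v

def thetaCl (X : Type u) [TopologicalSpace X] (A : Set X) : Set X :=
  {x | ∀ U : Set X, IsOpen U → x ∈ U → (closure U ∩ A).Nonempty}

def thetaClN (X : Type u) [TopologicalSpace X] (n : ℕ) (A : Set X) : Set X :=
  (thetaCl X)^[n] A

def gammaCl (X : Type u) [TopologicalSpace X] (n : ℕ) (A : Set X) : Set X :=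
  {x | ∀ U : Set X, IsOpen U → x ∈ U → (thetaClN X n U ∩ A).Nonempty}

def ThetaUrysohn (X : Type u) [TopologicalSpace X] (n : ℕ) : Prop :=
  ∀ x y : X, x ≠ y → ∃ U V : Set X, IsOpen U ∧ IsOpen V ∧ x ∈ U ∧ y ∈ V ∧
    thetaClN X n U ∩ thetaClN X n V = ∅

noncomputable def thetaUc (X : Type u) [TopologicalSpace X] (n : ℕ) : Cardinal.{u} :=
  sSup {c | ∃ V : Set (Set X), (∀ U ∈ V, IsOpen U) ∧
    (∀ U₁ ∈ V, ∀ U₂ ∈ V, U₁ ≠ U₂ → thetaClN X n U₁ ∩ thetaClN X n U₂ = ∅) ∧ c = #V}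

noncomputable def piChar (X : Type u) [TopologicalSpace X] : Cardinal.{u} :=
  ⨆ x : X, sInf {κ | ∃ B : Set (Set X), #B ≤ κ ∧ (∀ U ∈ B, IsOpen U ∧ U.Nonempty) ∧
    ∀ V : Set X, IsOpen V → x ∈ V → ∃ U ∈ B, U ⊆ V}

/-!
Fix `e ∈ X`, a local π-base `B` at `e` with `#B ≤ πχ(X)` and homeomorphisms `h x` with
`h x e = x`. For `x ≠ y`, pulling a θⁿ-Urysohn separation of `x` and `y` back along `h x` and
`h y` to a neighbourhood of `e` yields `W ∈ B` such that `h x '' W` and `h y '' W` have disjoint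
n-θ-closures. Colour the pair `{x, y}` by such a `W`. If `#X > 2 ^ κ` with
`κ = θⁿ-Uc(X) · πχ(X)` infinite, the Erdős–Rado theorem `(2^κ)⁺ → (κ⁺)²_κ` gives `κ⁺` points
with a common colour `W`, and their sets `h x '' W` form a θⁿ-Urysohn cellular family of size
`κ⁺ > θⁿ-Uc(X)`. If `πχ(X)` is finite, every point has a member of its π-base inside all of its
neighbourhoods, and these sets form a cellular family indexed by `X` itself.
-/

section ThetaClosure

variable {X : Type u} [TopologicalSpace X]

theorem subset_thetaCl (A : Set X) : A ⊆ thetaCl X A :=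
  fun x hx _ _ hxU => ⟨x, subset_closure hxU, hx⟩

theorem monotone_thetaCl : Monotone (thetaCl X) :=
  fun _ _ hAB _ hx U hU hxU => (hx U hU hxU).mono (inter_subset_inter_right _ hAB)

theorem subset_thetaClN (n : ℕ) (A : Set X) : A ⊆ thetaClN X n A :=
  Function.id_le_iterate_of_id_le subset_thetaCl n A

theorem thetaClN_mono (n : ℕ) {A B : Set X} (h : A ⊆ B) : thetaClN X n A ⊆ thetaClN X n B :=
  monotone_thetaCl.iterate n h

theorem ThetaUrysohn.exists_disjoint_thetaClN {n : ℕ} (hX : ThetaUrysohn X n) {x y : X}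
    (hxy : x ≠ y) :
    ∃ U V : Set X, IsOpen U ∧ IsOpen V ∧ x ∈ U ∧ y ∈ V ∧
      Disjoint (thetaClN X n U) (thetaClN X n V) := by
  simpa only [disjoint_iff_inter_eq_empty] using hX x y hxy

theorem mk_le_thetaUc_of_cellular {n : ℕ} (V : Set (Set X)) (hopen : ∀ U ∈ V, IsOpen U)
    (hcell : ∀ U₁ ∈ V, ∀ U₂ ∈ V, U₁ ≠ U₂ → thetaClN X n U₁ ∩ thetaClN X n U₂ = ∅) :
    #V ≤ thetaUc X n :=
  le_csSup ⟨#(Set X), fun _ ⟨_, _, _, hc⟩ => hc ▸ mk_subtype_le _⟩ ⟨V, hopen, hcell, rfl⟩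

theorem one_le_thetaUc (n : ℕ) : 1 ≤ thetaUc X n := by
  simpa using mk_le_thetaUc_of_cellular (n := n) {(∅ : Set X)} (by simp) (by simp)

theorem mk_le_thetaUc {n : ℕ} {ι : Type u} (U : ι → Set X) (hopen : ∀ i, IsOpen (U i))
    (hne : ∀ i, (U i).Nonempty)
    (hdisj : Pairwise fun i j => Disjoint (thetaClN X n (U i)) (thetaClN X n (U j))) :
    #ι ≤ thetaUc X n := by
  have hinj : Function.Injective U := by
    intro i j hij
    by_contra hne'
    obtain ⟨x, hx⟩ := hne i
    exact (hdisj hne').notMem_of_mem_left (subset_thetaClN n _ hx)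
      (subset_thetaClN n _ (hij ▸ hx))
  rw [← mk_range_eq U hinj]
  refine mk_le_thetaUc_of_cellular _ (forall_mem_range.mpr hopen) ?_
  rintro - ⟨i, rfl⟩ - ⟨j, rfl⟩ hij
  exact disjoint_iff_inter_eq_empty.mp (hdisj fun h => hij (h ▸ rfl))

end ThetaClosure

section PiBase

variable {X : Type u} [TopologicalSpace X]

def IsLocalPiBase (x : X) (B : Set (Set X)) : Prop :=
  (∀ U ∈ B, IsOpen U ∧ U.Nonempty) ∧ ∀ V : Set X, IsOpen V → x ∈ V → ∃ U ∈ B, U ⊆ V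

theorem exists_isLocalPiBase_mk_le_piChar (x : X) :
    ∃ B : Set (Set X), IsLocalPiBase x B ∧ #B ≤ piChar X := by
  have hne : {κ | ∃ B : Set (Set X), #B ≤ κ ∧ IsLocalPiBase x B}.Nonempty :=
    ⟨_, {U | IsOpen U ∧ U.Nonempty}, le_rfl, fun _ hU => hU,
      fun V hV hxV => ⟨V, ⟨hV, x, hxV⟩, subset_rfl⟩⟩
  obtain ⟨B, hBκ, hB⟩ := csInf_mem hne
  exact ⟨B, hB, hBκ.trans (le_ciSup bddAbove_of_small x)⟩

theorem IsLocalPiBase.nonempty {x : X} {B : Set (Set X)} (hB : IsLocalPiBase x B) :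
    B.Nonempty :=
  let ⟨U, hU, _⟩ := hB.2 univ isOpen_univ trivial
  ⟨U, hU⟩

theorem one_le_piChar [Nonempty X] : 1 ≤ piChar X := by
  obtain ⟨B, hB, hBπ⟩ := exists_isLocalPiBase_mk_le_piChar (Classical.arbitrary X)
  exact (Cardinal.one_le_iff_ne_zero.2 (mk_ne_zero_iff.2 hB.nonempty.to_subtype)).trans hBπ

theorem IsLocalPiBase.exists_subset_of_finite {x : X} {B : Set (Set X)} (hB : IsLocalPiBase x B)
    (hfin : B.Finite) : ∃ P ∈ B, ∀ V : Set X, IsOpen V → x ∈ V → P ⊆ V := by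
  by_contra! h
  choose! V hV hxV hPV using h
  obtain ⟨P, hPB, hP⟩ := hB.2 (⋂ P ∈ B, V P) (hfin.isOpen_biInter hV) (mem_iInter₂.2 hxV)
  exact hPV P hPB (hP.trans (biInter_subset_of_mem hPB))

end PiBase

namespace ErdosRado

variable {ι C : Type u} (f : Sym2 ι → C) {J : Type u} [LinearOrder J] [WellFoundedLT J]

/-- `seq f x j` is a point `a` different from the earlier ones with
`f s(seq f x i, a) = f s(seq f x i, x)` for `i < j`; `x` itself qualifies until it is picked.
The choice depends only on the set of qualifying points, so points with the same colour trace
get the same sequence. -/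
noncomputable def seq (x : ι) : J → ι :=
  wellFounded_lt.fix fun j seq =>
    (insert_nonempty x
      {a | ∀ i (hi : i < j), seq i hi ≠ a ∧ f s(seq i hi, a) = f s(seq i hi, x)}).some

def candidates (x : ι) (j : J) : Set ι :=
  {a | ∀ i < j, seq f x i ≠ a ∧ f s(seq f x i, a) = f s(seq f x i, x)}

theorem seq_eq (x : ι) (j : J) : seq f x j = (insert_nonempty x (candidates f x j)).some := by
  rw [seq, WellFounded.fix_eq]
  rfl

theorem seq_mem_candidates {x : ι} {j : J} (hx : ∀ i < j, seq f x i ≠ x) :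
    seq f x j ∈ candidates f x j := by
  have hxj : x ∈ candidates f x j := fun i hi => ⟨hx i hi, rfl⟩
  rw [seq_eq]
  rcases (insert_nonempty x (candidates f x j)).some_mem with h | h
  · rwa [h]
  · exact h

theorem seq_eq_seq_of_trace_eq {x y : ι} {d : J} (hx : ∀ j < d, seq f x j ≠ x)
    (hy : ∀ j < d, seq f y j ≠ y) (htr : ∀ i < d, f s(seq f x i, x) = f s(seq f y i, y)) :
    ∀ j ≤ d, seq f x j = seq f y j := by
  intro j
  induction j using (wellFounded_lt (α := J)).induction with
  | _ j ih =>
    intro hjd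
    have hcand : candidates f x j = candidates f y j :=
      Set.ext fun a => forall₂_congr fun i hi => by
        rw [htr i (hi.trans_le hjd), ih i hi (hi.le.trans hjd)]
    have hxj : x ∈ candidates f x j := fun i hi => ⟨hx i (hi.trans_le hjd), rfl⟩
    have hyj : y ∈ candidates f y j := fun i hi => ⟨hy i (hi.trans_le hjd), rfl⟩
    rw [seq_eq, seq_eq]
    congr 1
    rw [insert_eq_of_mem hxj, insert_eq_of_mem hyj, hcand]

def returnsFirstAt (d : J) : Set ι :=
  {x | seq f x d = x ∧ ∀ j < d, seq f x j ≠ x}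

theorem mk_returnsFirstAt_le (d : J) : #(returnsFirstAt f d) ≤ #C ^ #(Iio d) := by
  rw [power_def]
  refine mk_le_of_injective
    (f := fun (x : returnsFirstAt f d) (i : Iio d) => f s(seq f x.1 i.1, x.1)) ?_
  rintro ⟨x, hxd, hx⟩ ⟨y, hyd, hy⟩ hxy
  have := seq_eq_seq_of_trace_eq f hx hy (fun i hi => congrFun hxy ⟨i, hi⟩) d le_rfl
  exact Subtype.ext (hxd.symm.trans (this.trans hyd))

theorem iUnion_returnsFirstAt (h : ∀ x, ∃ j : J, seq f x j = x) :
    ⋃ d : J, returnsFirstAt f d = Set.univ := by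
  refine eq_univ_of_forall fun x => ?_
  obtain ⟨d, hd, hmin⟩ := wellFounded_lt.has_min {j : J | seq f x j = x} (h x)
  exact mem_iUnion.2 ⟨d, hd, fun j hj hjx => hmin j hjx hj⟩

theorem mk_le_two_power_of_forall_exists_seq_eq {κ : Cardinal.{u}} (hκ : ℵ₀ ≤ κ)
    (hC : #C ≤ κ) (hJ : #J ≤ 2 ^ κ) (hIio : ∀ d : J, #(Iio d) ≤ κ)
    (h : ∀ x, ∃ j : J, seq f x j = x) : #ι ≤ 2 ^ κ := by
  have hfirst (d : J) : #(returnsFirstAt f d) ≤ 2 ^ κ :=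
    calc _ ≤ #C ^ #(Iio d) := mk_returnsFirstAt_le f d
      _ ≤ κ ^ κ := (power_le_power_right hC).trans
          (power_le_power_left (aleph0_pos.trans_le hκ).ne' (hIio d))
      _ = 2 ^ κ := power_self_eq hκ
  calc #ι = #(⋃ d : J, returnsFirstAt f d) := by
        rw [iUnion_returnsFirstAt f h, Cardinal.mk_univ]
    _ ≤ #J * 2 ^ κ := (mk_iUnion_le _).trans (by gcongr; exact ciSup_le' hfirst)
    _ ≤ 2 ^ κ * 2 ^ κ := by gcongr
    _ = 2 ^ κ := mul_eq_self (hκ.trans (cantor κ).le)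

/-- If `s := seq f x` never returns to `x`, then `f s(s i, s j) = f s(s i, x)` for `i < j`, so
each fibre of `i ↦ f s(s i, x)` is homogeneous, and one of them is large by pigeonhole. -/
theorem exists_pairwise_of_forall_seq_ne {κ : Cardinal.{u}} (hκ : ℵ₀ ≤ κ) (hC : #C ≤ κ)
    (hJ : #J = Order.succ κ) {x : ι} (hx : ∀ j : J, seq f x j ≠ x) :
    ∃ H : Set ι, ∃ c : C, Order.succ κ ≤ #H ∧ H.Pairwise fun a b => f s(a, b) = c := by
  have hseq (i j : J) (hij : i < j) :
      seq f x i ≠ seq f x j ∧ f s(seq f x i, seq f x j) = f s(seq f x i, x) :=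
    seq_mem_candidates f (j := j) (fun i _ => hx i) i hij
  have hinj : Function.Injective (seq f x : J → ι) := by
    intro i j hij
    by_contra hne
    rcases lt_or_gt_of_ne hne with h | h
    exacts [(hseq i j h).1 hij, (hseq j i h).1 hij.symm]
  obtain ⟨c, hc⟩ := infinite_pigeonhole_card (fun i : J => f s(seq f x i, x)) (Order.succ κ)
    hJ.ge (hκ.trans (Order.le_succ κ))
    (by rw [(isRegular_succ hκ).cof_ord]; exact hC.trans_lt (Order.lt_succ κ))
  refine ⟨seq f x '' ((fun i : J => f s(seq f x i, x)) ⁻¹' {c}), c, by rwa [mk_image_eq hinj],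
    ?_⟩
  rintro - ⟨i, hi, rfl⟩ - ⟨j, hj, rfl⟩ hne
  rcases lt_or_gt_of_ne (ne_of_apply_ne _ hne) with h | h
  · rw [(hseq i j h).2]
    exact hi
  · rw [Sym2.eq_swap, (hseq j i h).2]
    exact hj

end ErdosRado

theorem erdos_rado {ι C : Type u} {κ : Cardinal.{u}} (hκ : ℵ₀ ≤ κ) (hC : #C ≤ κ)
    (hι : 2 ^ κ < #ι) (f : Sym2 ι → C) :
    ∃ H : Set ι, ∃ c : C, Order.succ κ ≤ #H ∧ H.Pairwise fun a b => f s(a, b) = c := by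
  have hJ : #(Order.succ κ).ord.ToType = Order.succ κ := mk_ord_toType _
  by_cases h : ∃ x, ∀ j : (Order.succ κ).ord.ToType, ErdosRado.seq f x j ≠ x
  · obtain ⟨x, hx⟩ := h
    exact ErdosRado.exists_pairwise_of_forall_seq_ne f hκ hC hJ hx
  · push Not at h
    refine absurd (ErdosRado.mk_le_two_power_of_forall_exists_seq_eq f hκ hC
      (hJ.trans_le (Order.succ_le_of_lt (cantor κ)))
      (fun d => by simpa using mk_Iio_lt d) h) hι.not_ge

section Homogeneous

variable {X : Type u} [TopologicalSpace X] {n : ℕ}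

theorem ThetaUrysohn.mk_le_thetaUc_of_piChar_lt_aleph0 (hX : ThetaUrysohn X n)
    (hπ : piChar X < ℵ₀) : #X ≤ thetaUc X n := by
  have hmin (x : X) : ∃ P : Set X, IsOpen P ∧ P.Nonempty ∧
      ∀ V : Set X, IsOpen V → x ∈ V → P ⊆ V := by
    obtain ⟨B, hB, hBπ⟩ := exists_isLocalPiBase_mk_le_piChar x
    obtain ⟨P, hPB, hP⟩ :=
      hB.exists_subset_of_finite (lt_aleph0_iff_set_finite.mp (hBπ.trans_lt hπ))
    exact ⟨P, (hB.1 P hPB).1, (hB.1 P hPB).2, hP⟩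
  choose P hPopen hPne hP using hmin
  refine mk_le_thetaUc P hPopen hPne fun x y hxy => ?_
  obtain ⟨U, V, hU, hV, hxU, hyV, hUV⟩ := hX.exists_disjoint_thetaClN hxy
  exact hUV.mono (thetaClN_mono n (hP x U hU hxU)) (thetaClN_mono n (hP y V hV hyV))

theorem ThetaUrysohn.exists_disjoint_thetaClN_image (hX : ThetaUrysohn X n) {e : X}
    {B : Set (Set X)} (hB : IsLocalPiBase e B) {f g : X → X} (hf : Continuous f)
    (hg : Continuous g) (hfg : f e ≠ g e) :
    ∃ W ∈ B, Disjoint (thetaClN X n (f '' W)) (thetaClN X n (g '' W)) := by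
  obtain ⟨U, V, hU, hV, hU_mem, hV_mem, hUV⟩ := hX.exists_disjoint_thetaClN hfg
  obtain ⟨W, hWB, hW⟩ :=
    hB.2 (f ⁻¹' U ∩ g ⁻¹' V) ((hU.preimage hf).inter (hV.preimage hg)) ⟨hU_mem, hV_mem⟩
  exact ⟨W, hWB, hUV.mono (thetaClN_mono n (image_subset_iff.2 (hW.trans inter_subset_left)))
    (thetaClN_mono n (image_subset_iff.2 (hW.trans inter_subset_right)))⟩

theorem ThetaUrysohn.exists_sym2_coloring (hX : ThetaUrysohn X n) {e : X}
    {B : Set (Set X)} (hB : IsLocalPiBase e B) (h : X → X ≃ₜ X) (he : ∀ x, h x e = x) :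
    ∃ F : Sym2 X → B, ∀ p q, p ≠ q →
      Disjoint (thetaClN X n (h p '' F s(p, q))) (thetaClN X n (h q '' F s(p, q))) := by
  have : Nonempty B := hB.nonempty.to_subtype
  have hsep (z : Sym2 X) : ∃ W : B, ∀ p q, s(p, q) = z → p ≠ q →
      Disjoint (thetaClN X n (h p '' W)) (thetaClN X n (h q '' W)) := by
    induction z using Sym2.ind with
    | _ p q =>
      by_cases hpq : p = q
      · refine ⟨Classical.arbitrary B, fun p' q' hz hne => ?_⟩
        rcases Sym2.eq_iff.1 hz with ⟨rfl, rfl⟩ | ⟨rfl, rfl⟩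
        exacts [absurd hpq hne, absurd hpq.symm hne]
      · obtain ⟨W, hWB, hW⟩ := hX.exists_disjoint_thetaClN_image hB (h p).continuous
          (h q).continuous (by rwa [he, he])
        refine ⟨⟨W, hWB⟩, fun p' q' hz _ => ?_⟩
        rcases Sym2.eq_iff.1 hz with ⟨rfl, rfl⟩ | ⟨rfl, rfl⟩
        exacts [hW, hW.symm]
  choose F hF using hsep
  exact ⟨F, fun p q => hF _ p q rfl⟩

theorem ThetaUrysohn.mk_le_two_power_of_homogeneous (hX : ThetaUrysohn X n)
    (hhom : ∀ x y : X, ∃ h : X ≃ₜ X, h x = y) {κ : Cardinal.{u}} (hκ : ℵ₀ ≤ κ)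
    (hμ : thetaUc X n ≤ κ) (hπ : piChar X ≤ κ) : #X ≤ 2 ^ κ := by
  by_contra! hlt
  obtain ⟨e⟩ : Nonempty X := mk_ne_zero_iff.1 (zero_le.trans_lt hlt).ne'
  choose h he using hhom e
  obtain ⟨B, hB, hBπ⟩ := exists_isLocalPiBase_mk_le_piChar e
  obtain ⟨F, hF⟩ := hX.exists_sym2_coloring hB h he
  obtain ⟨H, W, hH, hHW⟩ := erdos_rado hκ (hBπ.trans hπ) hlt F
  have hcell : #H ≤ thetaUc X n := by
    refine mk_le_thetaUc (fun p : H => h p '' W) (fun p => (h p).isOpenMap _ (hB.1 W W.2).1)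
      (fun p => (hB.1 W W.2).2.image _) fun p q hpq => ?_
    have hne : (p : X) ≠ q := Subtype.coe_ne_coe.2 hpq
    simpa only [hHW p.2 q.2 hne] using hF p q hne
  exact (Order.lt_succ κ).not_ge (hH.trans (hcell.trans hμ))

end Homogeneous

theorem card_le_of_homogeneous (X : Type u) [TopologicalSpace X] (n : ℕ)
    (hhom : ∀ x y : X, ∃ h : X ≃ₜ X, h x = y)
    (hX : ThetaUrysohn X n) :
    #X ≤ 2 ^ (thetaUc X n * piChar X) := by
  rcases isEmpty_or_nonempty X with _ | _
  · simp
  have hμ : 1 ≤ thetaUc X n := one_le_thetaUc n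
  have hπ : 1 ≤ piChar X := one_le_piChar
  rcases lt_or_ge (piChar X) ℵ₀ with hπ_fin | hπ_inf
  · calc #X ≤ thetaUc X n := hX.mk_le_thetaUc_of_piChar_lt_aleph0 hπ_fin
      _ ≤ 2 ^ thetaUc X n := (cantor _).le
      _ ≤ 2 ^ (thetaUc X n * piChar X) :=
        power_le_power_left two_ne_zero (le_mul_of_one_le_right' hπ)
  · exact hX.mk_le_two_power_of_homogeneous hhom (hπ_inf.trans (le_mul_of_one_le_left' hμ))
      (le_mul_of_one_le_right' hπ) (le_mul_of_one_le_left' hμ)
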